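/- arXiv:2409.12321 — 2 statements merged into one kernel-verified Lean document; each statement's English description precedes it below -/
import Mathlib

section
/- The number of partitions of n in which no part is congruent to 3 modulo 6 equals the number of partitions of n in which each odd part appears at most twice (even parts unrestricted). -/
/-!
Generating functions. Partitions with no part `≡ 3 (mod 6)` are counted by
`∏_{k ≢ 3 (mod 6)} 1 / (1 - X^k)`, those whose odd parts occur at most twice by
`∏_{k even} 1 / (1 - X^k) * ∏_{k odd} (1 + X^k + X^(2k))`. As
`1 + X^k + X^(2k) = (1 - X^(3k)) / (1 - X^k)` and `k ↦ 3k` maps the odd numbers onto those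
`≡ 3 (mod 6)`, the two products agree. This is Glaisher's argument, applied only to the parts in
a set `T` with `3k ∈ T ↔ k ∈ T` (here the odd numbers).
-/

open Finset PowerSeries PowerSeries.WithPiTopology

theorem tprod_ite_mul_eq_tprod_ite_dvd {α : Type*} [CommMonoid α] [TopologicalSpace α]
    (T : ℕ → Prop) [DecidablePred T] {m : ℕ} (hm : 0 < m) (hT : ∀ k, T (k * m) ↔ T k)
    (f : ℕ → α) :
    ∏' i, (if T (i + 1) then f ((i + 1) * m) else 1) =
      ∏' i, (if T (i + 1) ∧ m ∣ i + 1 then f (i + 1) else 1) := by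
  symm
  have hsucc (i : ℕ) : (i + 1) * m - 1 + 1 = (i + 1) * m := by
    have : 0 < (i + 1) * m := by positivity
    omega
  refine tprod_eq_tprod_of_ne_one_bij (fun i ↦ (i.val + 1) * m - 1) ?_ ?_ ?_
  · intro a b h
    have := congrArg (· + 1) h
    simp only [hsucc, mul_left_inj' hm.ne', add_left_inj] at this
    exact Subtype.ext this
  · intro j hj
    simp only [Function.mem_mulSupport, ne_eq, ite_eq_right_iff, not_forall] at hj
    obtain ⟨⟨hTj, k, hk⟩, hfj⟩ := hj
    have hk1 : k - 1 + 1 = k := Nat.sub_add_cancel (Nat.pos_of_ne_zero (by rintro rfl; simp at hk))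
    have hTk : T k := by rw [← hT, mul_comm, ← hk]; exact hTj
    refine ⟨⟨k - 1, ?_⟩, ?_⟩
    · simp [hk1, hTk, mul_comm k, ← hk, hfj]
    · simp [hk1, mul_comm k, ← hk]
  · intro i
    have hi := i.prop
    simp only [Function.mem_mulSupport, ne_eq, ite_eq_right_iff, not_forall] at hi
    simp [hsucc, hT, hi.1]

namespace Nat.Partition

section

variable (T : ℕ → Prop) [DecidablePred T]

def countRestrictedOn (n m : ℕ) : Finset n.Partition :=
  univ.filter fun p ↦ ∀ i ∈ p.parts, T i → p.parts.count i < m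

theorem hasProd_powerSeriesMk_card_countRestrictedOn (R : Type*) [CommSemiring R]
    [TopologicalSpace R] [T2Space R] [IsTopologicalSemiring R] {m : ℕ} (hm : 0 < m) :
    HasProd (fun i ↦ if T (i + 1) then ∑ j ∈ range m, X ^ ((i + 1) * j)
        else ∑' j : ℕ, X ^ ((i + 1) * j))
      (PowerSeries.mk fun n ↦ (#(countRestrictedOn T n m) : R)) := by
  nontriviality R using Subsingleton.eq_one (α := R⟦X⟧)
  convert! hasProd_genFun (fun i c ↦ if T i → c < m then (1 : R) else 0) using 1
  · ext1 i
    split_ifs with hT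
    · rw [sum_range_eq_add_Ico _ hm, sum_Ico_eq_sum_range]
      simp only [hT, forall_const]
      congrm $(by simp) + ?_
      rw [tsum_eq_sum (s := range (m - 1)) fun j hj ↦ by
        simp at hj; simp [show ¬ j + 1 < m by omega]]
      exact sum_congr rfl fun j hj ↦ by
        simp at hj; simp [show j + 1 < m by omega, add_comm 1 j]
    · rw [tsum_eq_zero_add' ?_]
      · simp [hT]
      simp_rw [pow_mul, pow_add]
      apply Summable.mul_right
      exact summable_pow_of_constantCoeff_eq_zero (by simp)
  · simp_rw [genFun, countRestrictedOn, card_filter, Finsupp.prod, prod_boole]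
    simp

theorem card_restricted_eq_card_countRestrictedOn (n : ℕ) {m : ℕ} (hm : 0 < m)
    (hT : ∀ k, T (k * m) ↔ T k) :
    #(restricted n fun i ↦ T i → ¬ m ∣ i) = #(countRestrictedOn T n m) := by
  suffices (PowerSeries.mk fun n ↦ (#(restricted n fun i ↦ T i → ¬ m ∣ i) : ℤ)) =
      PowerSeries.mk fun n ↦ (#(countRestrictedOn T n m) : ℤ) by
    simpa using PowerSeries.ext_iff.mp this n
  have geom (i : ℕ) : (∑' j, (X : ℤ⟦X⟧) ^ ((i + 1) * j)) * (1 - X ^ (i + 1)) = 1 := by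
    simp_rw [pow_mul]
    exact tsum_pow_mul_one_sub_of_constantCoeff_eq_zero (by simp)
  have hL := hasProd_powerSeriesMk_card_restricted ℤ fun i ↦ T i → ¬ m ∣ i
  have hR := hasProd_powerSeriesMk_card_countRestrictedOn T ℤ hm
  rw [← hL.tprod_eq, ← hR.tprod_eq]
  apply mul_right_cancel₀ (tprod_one_sub_X_pow_ne_zero ℤ)
  rw [← hL.multipliable.tprod_mul (multipliable_one_sub_X_pow ℤ),
    ← hR.multipliable.tprod_mul (multipliable_one_sub_X_pow ℤ)]
  calc ∏' i, (if T (i + 1) → ¬ m ∣ i + 1 then ∑' j, (X : ℤ⟦X⟧) ^ ((i + 1) * j) else 1) *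
        (1 - X ^ (i + 1))
      = ∏' i, if T (i + 1) ∧ m ∣ i + 1 then 1 - X ^ (i + 1) else 1 := by
        refine tprod_congr fun i ↦ ?_
        by_cases h : T (i + 1) ∧ m ∣ i + 1
        · simp [h]
        · rw [if_pos fun hT hdvd ↦ h ⟨hT, hdvd⟩, if_neg h, geom]
    _ = ∏' i, if T (i + 1) then 1 - X ^ ((i + 1) * m) else 1 :=
        (tprod_ite_mul_eq_tprod_ite_dvd T hm hT fun k ↦ 1 - X ^ k).symm
    _ = ∏' i, (if T (i + 1) then ∑ j ∈ range m, X ^ ((i + 1) * j)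
          else ∑' j, X ^ ((i + 1) * j)) * (1 - X ^ (i + 1)) := by
        refine tprod_congr fun i ↦ ?_
        split_ifs
        · simp_rw [pow_mul, geom_sum_mul_neg]
        · rw [geom]

end

end Nat.Partition

theorem noPart3Mod6_eq_oddAtMostTwice (n : ℕ) :
    Fintype.card {p : n.Partition // ∀ x ∈ p.parts, x % 6 ≠ 3} =
      Fintype.card {p : n.Partition // ∀ x ∈ p.parts, Odd x → p.parts.count x ≤ 2} := by
  have h := Nat.Partition.card_restricted_eq_card_countRestrictedOn Odd n (m := 3) (by norm_num)
    fun k ↦ by rw [Nat.odd_mul]; exact and_iff_left (by decide)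
  rw [Fintype.card_subtype, Fintype.card_subtype]
  convert h using 2 <;> ext p <;>
    simp only [Nat.Partition.restricted, Nat.Partition.countRestrictedOn, mem_filter, mem_univ,
      true_and]
  · refine forall₂_congr fun x _ ↦ ?_
    rw [Nat.odd_iff, Nat.dvd_iff_mod_eq_zero]
    omega
  · simp only [Nat.lt_succ_iff]
end

section
/- The eta-quotient identity (f_2^2 f_3 f_12)/(f_1 f_4 f_6) = ∑_{k=-∞}^{∞} q^{3k^2+2k} holds as formal power series. -/
open PowerSeries

/-- `f r` is the formal power series `∏_{i ≥ 1} (1 - q^(r·i))`; its `n`-th coefficient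
agrees with that of the partial product up to `i = n + 1`. -/
noncomputable def f (r : ℕ) : PowerSeries ℚ :=
  PowerSeries.mk fun n =>
    PowerSeries.coeff n
      (∏ i ∈ Finset.range (n + 1), (1 - (PowerSeries.X : PowerSeries ℚ) ^ (r * (i + 1))))

/-- `a n` is the number of partitions of `n` with no part congruent to 3 mod 6. -/
def a (n : ℕ) : ℕ := Fintype.card {p : n.Partition // ∀ x ∈ p.parts, x % 6 ≠ 3}

/-!
Multiplying `1 - q^(d i)` by `1 + q^(d i)` gives `f_{2d} = f_d ∏_{i ≥ 1} (1 + q^(d i))`, and sorting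
the factors of `∏ (1 + q^i)` by residue mod 6 turns the eta quotient into
`f_6 ∏_{j ≥ 0} (1 + q^(6j+1)) (1 + q^(6j+5))`. This is the Jacobi triple product for
`∑ q^(3k²+2k)`, obtained as the limit of its finite form
`∏_{j < N} (1 + q^(6j+1)) (1 + q^(6j+5)) = ∑_{|k| ≤ N} q^(3k²+2k) [2N, N+k]_{q^6}`,
which is Cauchy's `q`-binomial theorem for `∏_{t < 2N} (q^(6N) + q · q^(6t))` after dividing by
`q^(9N²-2N)`. Modulo `q^(n+1)` and for `N > 2n`, every term with `3k²+2k ≤ n` has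
`(q^6; q^6)_N [2N, N+k]_{q^6} ≡ 1`, because `(q^6; q^6)_m` no longer depends on `m ≥ n + 1`.

Infinite products live in the coefficientwise topology on power series, where `∏ F i` converges
as soon as `F i ≡ 1 mod X^(i+1)`, its `n`-th coefficient being that of any partial product of
more than `n` factors.
-/

open Finset
open scoped PowerSeries.WithPiTopology

theorem Finset.prod_range_mul_eq_prod_range_prod_range {M : Type*} [CommMonoid M] (F : ℕ → M)
    (m N : ℕ) : ∏ k ∈ range (m * N), F k = ∏ j ∈ range N, ∏ r ∈ range m, F (m * j + r) := by
  induction N with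
  | zero => simp
  | succ N ih => rw [mul_add_one, prod_range_add, ih, prod_range_succ]

theorem Nat.succ_choose_two (i : ℕ) : (i + 1).choose 2 = i.choose 2 + i := by
  rw [Nat.choose_succ_succ, Nat.choose_one_right, add_comm]

section QBinomial

variable {R : Type*} [CommRing R]

/-- `qBinom q i j` is the Gaussian binomial coefficient `[i + j choose i]_q`. -/
def qBinom (q : R) : ℕ → ℕ → R
  | 0, _ => 1
  | _ + 1, 0 => 1
  | i + 1, j + 1 => qBinom q i (j + 1) + q ^ (i + 1) * qBinom q (i + 1) j

def qPochhammer (q : R) (m : ℕ) : R := ∏ t ∈ range m, (1 - q ^ (t + 1))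

@[simp] theorem qBinom_zero_left (q : R) (j : ℕ) : qBinom q 0 j = 1 := by
  rw [qBinom]

@[simp] theorem qBinom_zero_right (q : R) (i : ℕ) : qBinom q i 0 = 1 := by
  cases i <;> rw [qBinom]

theorem qBinom_succ_succ (q : R) (i j : ℕ) :
    qBinom q (i + 1) (j + 1) = qBinom q i (j + 1) + q ^ (i + 1) * qBinom q (i + 1) j := by
  rw [qBinom]

@[simp] theorem qPochhammer_zero (q : R) : qPochhammer q 0 = 1 := prod_range_zero _

theorem qPochhammer_succ (q : R) (m : ℕ) :
    qPochhammer q (m + 1) = qPochhammer q m * (1 - q ^ (m + 1)) :=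
  prod_range_succ _ _

theorem qBinom_mul_qPochhammer_mul_qPochhammer (q : R) (i j : ℕ) :
    qBinom q i j * qPochhammer q i * qPochhammer q j = qPochhammer q (i + j) := by
  induction i generalizing j with
  | zero => simp
  | succ i ihi =>
    induction j with
    | zero => simp
    | succ j ihj =>
      have h1 := ihi (j + 1)
      rw [show i + (j + 1) = i + j + 1 by ring, qPochhammer_succ q j] at h1
      rw [show i + 1 + j = i + j + 1 by ring, qPochhammer_succ q i] at ihj
      rw [qBinom_succ_succ, show i + 1 + (j + 1) = i + j + 1 + 1 by ring,
        qPochhammer_succ q (i + j + 1), qPochhammer_succ q i, qPochhammer_succ q j]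
      linear_combination (1 - q ^ (i + 1)) * h1 + q ^ (i + 1) * (1 - q ^ (j + 1)) * ihj

theorem prod_add_mul_pow_eq_sum_antidiagonal (q y z : R) (n : ℕ) :
    ∏ t ∈ range n, (y + z * q ^ t) =
      ∑ p ∈ antidiagonal n, q ^ p.1.choose 2 * qBinom q p.1 p.2 * z ^ p.1 * y ^ p.2 := by
  induction n generalizing z with
  | zero => simp
  | succ n ih =>
    rw [prod_range_succ', pow_zero, mul_one,
      prod_congr rfl fun t _ => show y + z * q ^ (t + 1) = y + z * q * q ^ t by ring, ih]
    set T : ℕ × ℕ → R := fun p => q ^ p.1.choose 2 * qBinom q p.1 p.2 * z ^ p.1 * y ^ p.2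
    set U : ℕ × ℕ → R := fun p => q ^ p.1.choose 2 * qBinom q p.1 p.2 * (z * q) ^ p.1 * y ^ p.2
    have hT (p : ℕ × ℕ) :
        T (p.1 + 1, p.2 + 1) = y * U (p.1 + 1, p.2) + z * U (p.1, p.2 + 1) := by
      simp only [T, U, qBinom_succ_succ, Nat.succ_choose_two]
      ring
    cases n with
    | zero => simp [T, U, Nat.sum_antidiagonal_succ]
    | succ m =>
      calc (∑ p ∈ antidiagonal (m + 1), U p) * (y + z)
          = y * (U (0, m + 1) + ∑ p ∈ antidiagonal m, U (p.1 + 1, p.2)) +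
              z * (U (m + 1, 0) + ∑ p ∈ antidiagonal m, U (p.1, p.2 + 1)) := by
            rw [← Nat.sum_antidiagonal_succ, ← Nat.sum_antidiagonal_succ']
            ring
        _ = T (0, m + 1 + 1) + (T (m + 1 + 1, 0) +
              ∑ p ∈ antidiagonal m, T (p.1 + 1, p.2 + 1)) := by
            simp only [hT, sum_add_distrib, ← mul_sum]
            simp only [T, U, qBinom_zero_left, qBinom_zero_right, Nat.succ_choose_two]
            ring
        _ = ∑ p ∈ antidiagonal (m + 1 + 1), T p := by
            rw [Nat.sum_antidiagonal_succ, Nat.sum_antidiagonal_succ']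

end QBinomial

def octagonal (k : ℤ) : ℕ := (3 * k ^ 2 + 2 * k).toNat

theorem octagonal_cast (k : ℤ) : (octagonal k : ℤ) = 3 * k ^ 2 + 2 * k := by
  refine Int.toNat_of_nonneg ?_
  rcases le_or_gt 0 k with hk | hk <;> nlinarith

theorem abs_le_octagonal (k : ℤ) : |k| ≤ octagonal k := by
  rw [octagonal_cast]
  rcases abs_cases k with ⟨hk, _⟩ | ⟨hk, _⟩ <;> rw [hk] <;> nlinarith

theorem ncard_octagonal_eq_card_filter_antidiagonal {n N : ℕ} (hN : n ≤ N) :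
    Set.ncard {k : ℤ | 3 * k ^ 2 + 2 * k = n} =
      #{p ∈ (antidiagonal (2 * N) : Finset (ℕ × ℕ)) | n = octagonal ((p.2 : ℤ) - N)} := by
  have hset : {k : ℤ | 3 * k ^ 2 + 2 * k = n} =
      ↑({p ∈ (antidiagonal (2 * N) : Finset (ℕ × ℕ)) | n = octagonal ((p.2 : ℤ) - N)}.image
        fun p => (p.2 : ℤ) - N) := by
    ext k
    simp only [Set.mem_ofPred_eq, coe_image, coe_filter, HasAntidiagonal.mem_antidiagonal,
      Set.mem_image]
    constructor
    · intro hk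
      have hkn := abs_le.1 (show |k| ≤ n by rw [← hk, ← octagonal_cast]; exact abs_le_octagonal k)
      refine ⟨((N - k).toNat, (N + k).toNat), ⟨by omega, ?_⟩, by omega⟩
      rw [show ((N + k).toNat : ℤ) - N = k by omega]
      exact_mod_cast (hk.symm.trans (octagonal_cast k).symm)
    · rintro ⟨p, ⟨-, hp⟩, rfl⟩
      rw [← octagonal_cast, ← hp]
  rw [hset, Set.ncard_coe_finset, card_image_of_injOn]
  rintro p hp p' hp' h
  simp only [coe_filter, HasAntidiagonal.mem_antidiagonal, Set.mem_ofPred_eq] at hp hp' h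
  ext <;> omega

namespace PowerSeries

variable {R : Type*} [CommRing R]

section Congruence

variable {k l : ℕ} {A B : R⟦X⟧}

theorem coeff_eq_of_smodEq (h : A ≡ B [SMOD Ideal.span {X ^ k}]) {n : ℕ} (hn : n < k) :
    coeff n A = coeff n B := by
  rw [SModEq.sub_mem, Ideal.mem_span_singleton, X_pow_dvd_iff] at h
  simpa [sub_eq_zero] using h n hn

theorem smodEq_X_pow_of_le (hkl : k ≤ l) (h : A ≡ B [SMOD Ideal.span {X ^ l}]) :
    A ≡ B [SMOD Ideal.span {X ^ k}] :=
  h.mono (Ideal.span_singleton_le_span_singleton.2 (pow_dvd_pow X hkl))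

theorem X_pow_smodEq_zero {e : ℕ} (h : k ≤ e) : (X : R⟦X⟧) ^ e ≡ 0 [SMOD Ideal.span {X ^ k}] :=
  SModEq.zero.2 (Ideal.mem_span_singleton.2 (pow_dvd_pow X h))

theorem one_add_X_pow_smodEq_one {e : ℕ} (h : k ≤ e) :
    1 + (X : R⟦X⟧) ^ e ≡ 1 [SMOD Ideal.span {X ^ k}] := by
  simpa using SModEq.add (SModEq.refl 1) (X_pow_smodEq_zero (R := R) h)

theorem one_sub_X_pow_smodEq_one {e : ℕ} (h : k ≤ e) :
    1 - (X : R⟦X⟧) ^ e ≡ 1 [SMOD Ideal.span {X ^ k}] := by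
  simpa using (SModEq.refl (1 : R⟦X⟧)).sub (X_pow_smodEq_zero (R := R) h)

theorem one_sub_pow_smodEq_one {q : R⟦X⟧} (hq : X ∣ q) (t : ℕ) :
    1 - q ^ (t + 1) ≡ 1 [SMOD Ideal.span {X ^ (t + 1)}] := by
  simpa using (SModEq.refl (1 : R⟦X⟧)).sub
    (SModEq.zero.2 (Ideal.mem_span_singleton.2 (pow_dvd_pow_of_dvd hq (t + 1))))

end Congruence

section InfiniteProduct

variable {F : ℕ → R⟦X⟧}

theorem prod_smodEq_prod_range (hF : ∀ i, F i ≡ 1 [SMOD Ideal.span {X ^ (i + 1)}]) {n : ℕ}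
    {s : Finset ℕ} (hs : range n ⊆ s) :
    ∏ i ∈ s, F i ≡ ∏ i ∈ range n, F i [SMOD Ideal.span {X ^ n}] := by
  have tail : ∏ i ∈ s \ range n, F i ≡ ∏ i ∈ s \ range n, 1 [SMOD Ideal.span {X ^ n}] := by
    refine SModEq.prod fun i hi => smodEq_X_pow_of_le ?_ (hF i)
    simp only [mem_sdiff, mem_range, not_lt] at hi
    omega
  rw [prod_const_one] at tail
  simpa [prod_sdiff hs] using SModEq.mul tail (SModEq.refl (∏ i ∈ range n, F i))

variable [TopologicalSpace R]

theorem hasProd_of_smodEq_one (hF : ∀ i, F i ≡ 1 [SMOD Ideal.span {X ^ (i + 1)}]) :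
    HasProd F (mk fun n => coeff n (∏ i ∈ range (n + 1), F i)) := by
  rw [HasProd, WithPiTopology.tendsto_iff_coeff_tendsto]
  refine fun n => tendsto_const_nhds.congr' ?_
  filter_upwards [Filter.eventually_ge_atTop (range (n + 1))] with s hs
  rw [coeff_mk, coeff_eq_of_smodEq (prod_smodEq_prod_range hF hs) (lt_add_one n)]

theorem multipliable_one_add_X_pow {e : ℕ → ℕ} (he : ∀ i, i < e i) :
    Multipliable fun i => (1 + X ^ e i : R⟦X⟧) :=
  (hasProd_of_smodEq_one fun i => one_add_X_pow_smodEq_one (he i)).multipliable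

variable [T2Space R]

theorem coeff_tprod_of_smodEq_one (hF : ∀ i, F i ≡ 1 [SMOD Ideal.span {X ^ (i + 1)}])
    {n N : ℕ} (hN : n < N) : coeff n (∏' i, F i) = coeff n (∏ i ∈ range N, F i) := by
  rw [(hasProd_of_smodEq_one hF).tprod_eq, coeff_mk]
  exact (coeff_eq_of_smodEq (prod_smodEq_prod_range hF (range_subset_range.2 hN))
    (lt_add_one n)).symm

theorem tprod_eq_tprod_prod_range (hF : ∀ i, F i ≡ 1 [SMOD Ideal.span {X ^ (i + 1)}])
    {m : ℕ} (hm : 0 < m) : ∏' k, F k = ∏' j, ∏ r ∈ range m, F (m * j + r) := by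
  have hG (j : ℕ) : ∏ r ∈ range m, F (m * j + r) ≡ 1 [SMOD Ideal.span {X ^ (j + 1)}] := by
    have hle (r : ℕ) : j + 1 ≤ m * j + r + 1 := by nlinarith
    have h := SModEq.prod (s := range m) (x := fun r => F (m * j + r)) (y := fun _ => 1)
      fun r _ => smodEq_X_pow_of_le (hle r) (hF (m * j + r))
    rwa [prod_const_one] at h
  ext n
  rw [coeff_tprod_of_smodEq_one hF (show n < m * (n + 1) by nlinarith),
    coeff_tprod_of_smodEq_one hG (lt_add_one n), prod_range_mul_eq_prod_range_prod_range]

variable [IsTopologicalSemiring R]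

theorem tprod_one_add_X_pow_eq_mul {a b : ℕ} (ha : 0 < a) (hb : b = 2 * a) :
    ∏' i, (1 + X ^ (a * (i + 1)) : R⟦X⟧) =
      (∏' k, (1 + X ^ (b * k + a))) * ∏' i, (1 + X ^ (b * (i + 1))) := by
  subst hb
  rw [← tprod_even_mul_odd (f := fun i => (1 + X ^ (a * (i + 1)) : R⟦X⟧))
    (multipliable_one_add_X_pow fun k => by nlinarith)
    (multipliable_one_add_X_pow fun k => by nlinarith)]
  exact congrArg₂ (· * ·) (tprod_congr fun k => by ring_nf) (tprod_congr fun k => by ring_nf)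

theorem tprod_one_add_X_pow_two_mul_add_one :
    ∏' k, (1 + X ^ (2 * k + 1) : R⟦X⟧) =
      (∏' j, (1 + X ^ (6 * j + 1))) * (∏' j, (1 + X ^ (6 * j + 3))) *
        ∏' j, (1 + X ^ (6 * j + 5)) := by
  have hm (a : ℕ) : Multipliable fun j => (1 + X ^ (6 * j + a + 1) : R⟦X⟧) :=
    multipliable_one_add_X_pow fun j => by omega
  rw [tprod_eq_tprod_prod_range (fun k => one_add_X_pow_smodEq_one (by omega)) (m := 3)
    (by norm_num), ← Multipliable.tprod_mul (hm 0) (hm 2),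
    ← Multipliable.tprod_mul ((hm 0).mul (hm 2)) (hm 4)]
  refine tprod_congr fun j => ?_
  rw [prod_range_succ, prod_range_succ, prod_range_one]
  ring_nf

end InfiniteProduct

section JacobiTripleProduct

variable {q : R⟦X⟧}

theorem qPochhammer_smodEq_qPochhammer (hq : X ∣ q) {m a : ℕ} (ha : m ≤ a) :
    qPochhammer q a ≡ qPochhammer q m [SMOD Ideal.span {X ^ m}] :=
  prod_smodEq_prod_range (one_sub_pow_smodEq_one hq) (range_subset_range.2 ha)

theorem isUnit_qPochhammer (hq : X ∣ q) (m : ℕ) : IsUnit (qPochhammer q m) := by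
  have hq0 : constantCoeff q = 0 := by
    obtain ⟨r, rfl⟩ := hq
    simp
  rw [isUnit_iff_constantCoeff, qPochhammer, map_prod]
  simp [hq0]

theorem qPochhammer_mul_qBinom_smodEq_one (hq : X ∣ q) {m i j N : ℕ} (hi : m ≤ i) (hj : m ≤ j)
    (hN : m ≤ N) : qPochhammer q N * qBinom q i j ≡ 1 [SMOD Ideal.span {X ^ m}] := by
  set π := Ideal.Quotient.mk (Ideal.span {(X : R⟦X⟧) ^ m})
  have hP {a : ℕ} (ha : m ≤ a) : π (qPochhammer q a) = π (qPochhammer q m) :=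
    qPochhammer_smodEq_qPochhammer hq ha
  have hu : IsUnit (π (qPochhammer q m)) := (isUnit_qPochhammer hq m).map π
  have key := congrArg π (qBinom_mul_qPochhammer_mul_qPochhammer q i j)
  rw [map_mul, map_mul, hP hi, hP hj, hP (hi.trans (Nat.le_add_right i j))] at key
  show π _ = π 1
  rw [map_mul, map_one, hP hN]
  exact hu.mul_left_cancel (by linear_combination key)

theorem prod_X_pow_add_X_mul_pow_eq (N : ℕ) :
    ∏ t ∈ range (2 * N), ((X : R⟦X⟧) ^ (6 * N) + X * (X ^ 6) ^ t) =
      X ^ (6 * N * N + ∑ t ∈ range N, (6 * t + 1)) *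
        ∏ j ∈ range N, ((1 + X ^ (6 * j + 1)) * (1 + X ^ (6 * j + 5))) := by
  have low : ∏ t ∈ range N, ((X : R⟦X⟧) ^ (6 * N) + X * (X ^ 6) ^ t) =
      X ^ (∑ t ∈ range N, (6 * t + 1)) * ∏ j ∈ range N, (1 + X ^ (6 * j + 5)) := by
    rw [← prod_range_reflect (fun j => 1 + (X : R⟦X⟧) ^ (6 * j + 5)), ← prod_pow_eq_pow_sum,
      ← prod_mul_distrib]
    refine prod_congr rfl fun t ht => ?_
    have : 6 * N = 6 * t + 1 + (6 * (N - 1 - t) + 5) := by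
      have := mem_range.1 ht
      omega
    rw [this, pow_add, ← pow_mul]
    ring
  have high : ∏ t ∈ range N, ((X : R⟦X⟧) ^ (6 * N) + X * (X ^ 6) ^ (N + t)) =
      X ^ (6 * N * N) * ∏ j ∈ range N, (1 + X ^ (6 * j + 1)) := by
    rw [show (X : R⟦X⟧) ^ (6 * N * N) = ∏ _t ∈ range N, X ^ (6 * N) by
      rw [prod_const, card_range, pow_mul], ← prod_mul_distrib]
    exact prod_congr rfl fun t _ => by ring
  rw [two_mul, prod_range_add, low, high, prod_mul_distrib, pow_add]
  ring

theorem prod_one_add_X_pow_eq_sum_antidiagonal (N : ℕ) :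
    ∏ j ∈ range N, ((1 + X ^ (6 * j + 1)) * (1 + X ^ (6 * j + 5)) : R⟦X⟧) =
      ∑ p ∈ antidiagonal (2 * N), X ^ octagonal ((p.2 : ℤ) - N) * qBinom (X ^ 6) p.1 p.2 := by
  have hsum (M : ℕ) : ∑ t ∈ range M, (6 * (t : ℤ) + 1) = 3 * M ^ 2 - 2 * M := by
    induction M with
    | zero => simp
    | succ M ih => rw [sum_range_succ, ih]; push_cast; ring
  have hchoose (i : ℕ) : 2 * (i.choose 2 : ℤ) = i * (i - 1) := by
    induction i with
    | zero => simp
    | succ i ih => rw [Nat.succ_choose_two]; push_cast; linear_combination ih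
  have hexp (p : ℕ × ℕ) (hp : p ∈ antidiagonal (2 * N)) :
      6 * N * N + ∑ t ∈ range N, (6 * t + 1) + octagonal ((p.2 : ℤ) - N) =
        6 * p.1.choose 2 + p.1 + 6 * N * p.2 := by
    have hp' : (p.1 : ℤ) + p.2 = 2 * N := by exact_mod_cast mem_antidiagonal.1 hp
    zify
    rw [hsum, octagonal_cast]
    linear_combination -3 * hchoose p.1 + (3 * p.2 - 3 * p.1 - 6 * N + 2 : ℤ) * hp'
  apply X_pow_mul_cancel (k := 6 * N * N + ∑ t ∈ range N, (6 * t + 1))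
  rw [← prod_X_pow_add_X_mul_pow_eq, prod_add_mul_pow_eq_sum_antidiagonal, mul_sum]
  refine sum_congr rfl fun p hp => ?_
  rw [← mul_assoc, ← pow_add, hexp p hp, pow_add, pow_add, ← pow_mul, ← pow_mul]
  ring

theorem qPochhammer_mul_X_pow_octagonal_mul_qBinom_smodEq {n N : ℕ} (hN : 2 * n < N)
    {p : ℕ × ℕ} (hp : p ∈ antidiagonal (2 * N)) :
    qPochhammer (X ^ 6) N * ((X : R⟦X⟧) ^ octagonal ((p.2 : ℤ) - N) * qBinom (X ^ 6) p.1 p.2) ≡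
      X ^ octagonal ((p.2 : ℤ) - N) [SMOD Ideal.span {X ^ (n + 1)}] := by
  by_cases he : octagonal ((p.2 : ℤ) - N) ≤ n
  · have hp' := HasAntidiagonal.mem_antidiagonal.1 hp
    have hpN := abs_le.1 ((abs_le_octagonal _).trans (Nat.cast_le.2 he))
    have h := SModEq.mul (SModEq.refl ((X : R⟦X⟧) ^ octagonal ((p.2 : ℤ) - N)))
      (qPochhammer_mul_qBinom_smodEq_one (m := n + 1) (dvd_pow_self (X : R⟦X⟧) (n := 6) (by norm_num))
        (i := p.1) (j := p.2) (N := N) (by omega) (by omega) (by omega))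
    rwa [mul_one, mul_left_comm] at h
  · have h := X_pow_smodEq_zero (R := R) (not_le.1 he)
    have h' := SModEq.mul (SModEq.refl (qPochhammer (X ^ 6) N))
      (SModEq.mul h (SModEq.refl (qBinom (X ^ 6) p.1 p.2)))
    rw [zero_mul, mul_zero] at h'
    exact SModEq.trans h' (SModEq.symm h)

variable [TopologicalSpace R] [T2Space R]

theorem tprod_jacobi_eq_mk_ncard :
    ∏' j, ((1 - X ^ (6 * (j + 1))) * ((1 + X ^ (6 * j + 1)) * (1 + X ^ (6 * j + 5))) : R⟦X⟧) =
      mk fun n => (Set.ncard {k : ℤ | 3 * k ^ 2 + 2 * k = n} : R) := by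
  have hF (j : ℕ) : (1 - X ^ (6 * (j + 1))) * ((1 + X ^ (6 * j + 1)) * (1 + X ^ (6 * j + 5))) ≡
      (1 : R⟦X⟧) * (1 * 1) [SMOD Ideal.span {X ^ (j + 1)}] :=
    SModEq.mul (one_sub_X_pow_smodEq_one (by omega))
      (SModEq.mul (one_add_X_pow_smodEq_one (by omega)) (one_add_X_pow_smodEq_one (by omega)))
  simp only [mul_one] at hF
  ext n
  have hP : ∏ j ∈ range (2 * n + 1), (1 - (X : R⟦X⟧) ^ (6 * (j + 1))) =
      qPochhammer (X ^ 6) (2 * n + 1) :=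
    prod_congr rfl fun j _ => by rw [pow_mul]
  rw [coeff_tprod_of_smodEq_one hF (show n < 2 * n + 1 by omega), coeff_mk, prod_mul_distrib, hP,
    prod_one_add_X_pow_eq_sum_antidiagonal, mul_sum, map_sum, sum_congr rfl fun p hp =>
      coeff_eq_of_smodEq (qPochhammer_mul_X_pow_octagonal_mul_qBinom_smodEq (lt_add_one _) hp)
        (lt_add_one n)]
  simp only [coeff_X_pow, sum_boole]
  rw [ncard_octagonal_eq_card_filter_antidiagonal (show n ≤ 2 * n + 1 by omega)]

end JacobiTripleProduct

end PowerSeries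

theorem hasProd_f {r : ℕ} (hr : 0 < r) : HasProd (fun i => 1 - X ^ (r * (i + 1))) (f r) :=
  hasProd_of_smodEq_one fun i => one_sub_X_pow_smodEq_one (by nlinarith)

theorem constantCoeff_f {r : ℕ} (hr : 0 < r) : constantCoeff (f r) = 1 := by
  rw [← coeff_zero_eq_constantCoeff_apply, f, coeff_mk]
  simp [hr.ne']

theorem f_mul_tprod_one_add_X_pow {d : ℕ} (hd : 0 < d) :
    f d * ∏' i, (1 + X ^ (d * (i + 1))) = f (2 * d) := by
  refine ((hasProd_f hd).mul (multipliable_one_add_X_pow fun i => by nlinarith).hasProd).unique ?_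
  convert hasProd_f (show 0 < 2 * d by omega) using 2 with i
  ring

theorem f_six_mul_tprod_eq_mk_ncard :
    f 6 * ((∏' j, (1 + X ^ (6 * j + 1))) * ∏' j, (1 + X ^ (6 * j + 5))) =
      mk fun n => (Set.ncard {k : ℤ | 3 * k ^ 2 + 2 * k = n} : ℚ) := by
  have h6 := hasProd_f (r := 6) (by norm_num)
  have h1 := multipliable_one_add_X_pow (R := ℚ) (e := fun j => 6 * j + 1) fun j => by omega
  have h5 := multipliable_one_add_X_pow (R := ℚ) (e := fun j => 6 * j + 5) fun j => by omega
  rw [← h6.tprod_eq, ← h1.tprod_mul h5, ← h6.multipliable.tprod_mul (h1.mul h5),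
    tprod_jacobi_eq_mk_ncard]

/-- The eta-quotient equals the theta series ∑_{k ∈ ℤ} q^(3k²+2k); the coefficient of qⁿ on
the right is the number of integers k with 3k² + 2k = n. -/
theorem eta_quotient_theta :
    (f 2) ^ 2 * f 3 * f 12 * (f 1 * f 4 * f 6)⁻¹ =
      PowerSeries.mk fun n => (Set.ncard {k : ℤ | 3 * k ^ 2 + 2 * k = (n : ℤ)} : ℚ) := by
  have h2 : f 1 * ∏' i, (1 + X ^ (1 * (i + 1))) = f 2 := f_mul_tprod_one_add_X_pow one_pos
  have h4 : f 2 * ∏' i, (1 + X ^ (2 * (i + 1))) = f 4 := f_mul_tprod_one_add_X_pow two_pos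
  have h6 : f 3 * ∏' i, (1 + X ^ (3 * (i + 1))) = f 6 := f_mul_tprod_one_add_X_pow three_pos
  have h12 : f 6 * ∏' i, (1 + X ^ (6 * (i + 1))) = f 12 := f_mul_tprod_one_add_X_pow (by norm_num)
  have hP1 := tprod_one_add_X_pow_eq_mul (R := ℚ) (a := 1) (b := 2) one_pos rfl
  have hP3 := tprod_one_add_X_pow_eq_mul (R := ℚ) (a := 3) (b := 6) three_pos rfl
  have hodd := tprod_one_add_X_pow_two_mul_add_one (R := ℚ)
  have hunit : constantCoeff (f 1 * f 4 * f 6) ≠ 0 := by simp [constantCoeff_f]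
  rw [eq_comm, eq_mul_inv_iff_mul_eq hunit, ← f_six_mul_tprod_eq_mk_ncard, ← h12, ← h6, ← h4, ← h2,
    hP1, hP3, hodd]
  ring
end
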